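/- arXiv:0706.3863 — 6 statements merged into one kernel-verified Lean document; each statement's English description precedes it below -/
import Mathlib

section
/- Let n ≥ 1 and let c : Fin n → Fin n → Fin n → ℂ be invariant under all permutations of its three indices. Suppose the matrix G with entries G_{jk} = c(0,j,k) is invertible. Define a ℂ-bilinear multiplication * on ℂⁿ by setting, on basis vectors, e_i * e_j = Σ_k (Σ_l c(i,j,l) (G⁻¹)_{lk}) e_k, and let F_i denote the matrix with entries (F_i)_{jk} = c(i,j,k). Then: (1) e_0 is a two-sided unit for *; and (2) * is associative if and only if the Witten–Dijkgraaf–Verlinde–Verlinde equations F_i G⁻¹ F_j = F_j G⁻¹ F_i hold for all i, j. -/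
open scoped Matrix

private lemma wdvv_sum4_comm {M : Type*} [AddCommMonoid M] {ι : Type*} [Fintype ι]
    (f : ι → ι → ι → ι → M) :
    ∑ a, ∑ b, ∑ u, ∑ v, f u v b a = ∑ u, ∑ v, ∑ b, ∑ a, f u v b a :=
  calc ∑ a, ∑ b, ∑ u, ∑ v, f u v b a
      = ∑ b, ∑ a, ∑ u, ∑ v, f u v b a := Finset.sum_comm
    _ = ∑ b, ∑ u, ∑ a, ∑ v, f u v b a :=
        Finset.sum_congr rfl fun _ _ => Finset.sum_comm
    _ = ∑ b, ∑ u, ∑ v, ∑ a, f u v b a :=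
        Finset.sum_congr rfl fun _ _ => Finset.sum_congr rfl fun _ _ => Finset.sum_comm
    _ = ∑ u, ∑ b, ∑ v, ∑ a, f u v b a := Finset.sum_comm
    _ = ∑ u, ∑ v, ∑ b, ∑ a, f u v b a :=
        Finset.sum_congr rfl fun _ _ => Finset.sum_comm

private lemma wdvv_sum3_rot {M : Type*} [AddCommMonoid M] {ι : Type*} [Fintype ι]
    (f : ι → ι → ι → M) :
    ∑ a, ∑ v, ∑ b, f a v b = ∑ v, ∑ b, ∑ a, f a v b :=
  calc ∑ a, ∑ v, ∑ b, f a v b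
      = ∑ v, ∑ a, ∑ b, f a v b := Finset.sum_comm
    _ = ∑ v, ∑ b, ∑ a, f a v b :=
        Finset.sum_congr rfl fun _ _ => Finset.sum_comm

/-- For a totally symmetric 3-tensor `c` on `ℂⁿ` with invertible matrix
`G = (c(0,·,·))`, the bilinear multiplication with structure constants
`C_{ij}^k = Σ_l c_{ijl} (G⁻¹)_{lk}` has `e_0` as two-sided unit, and it is associative
iff the WDVV equations `F_i G⁻¹ F_j = F_j G⁻¹ F_i` hold. -/
theorem wdvv_iff_associative
    {n : ℕ} (hn : 0 < n)
    (c : Fin n → Fin n → Fin n → ℂ)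
    (hsymm1 : ∀ i j k, c i j k = c j i k)
    (hsymm2 : ∀ i j k, c i j k = c i k j)
    (G : Matrix (Fin n) (Fin n) ℂ)
    (hG : ∀ j k, G j k = c ⟨0, hn⟩ j k)
    (hGinv : IsUnit G.det)
    (mul : (Fin n → ℂ) →ₗ[ℂ] (Fin n → ℂ) →ₗ[ℂ] (Fin n → ℂ))
    (hmul : ∀ i j, mul (Pi.single i 1) (Pi.single j 1)
      = fun k => ∑ l, c i j l * G⁻¹ l k)
    (F : Fin n → Matrix (Fin n) (Fin n) ℂ)
    (hF : ∀ i j k, F i j k = c i j k) :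
    (∀ v : Fin n → ℂ,
      mul (Pi.single (⟨0, hn⟩ : Fin n) 1) v = v ∧
      mul v (Pi.single (⟨0, hn⟩ : Fin n) 1) = v) ∧
    ((∀ x y z : Fin n → ℂ, mul (mul x y) z = mul x (mul y z)) ↔
      (∀ i j, F i * G⁻¹ * F j = F j * G⁻¹ * F i)) := by
  classical
  set i0 : Fin n := ⟨0, hn⟩ with hi0
  set D : Fin n → Fin n → Fin n → ℂ := fun i j p => ∑ l, c i j l * G⁻¹ l p with hD
  have hexp : ∀ v : Fin n → ℂ, v = ∑ i, v i • (Pi.single i 1 : Fin n → ℂ) := by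
    intro v
    conv_lhs => rw [← Finset.univ_sum_single v]
    refine Finset.sum_congr rfl fun i _ => ?_
    ext j; simp [Pi.single_apply]
  have hmul' : ∀ x y : Fin n → ℂ, mul x y = fun p => ∑ i, ∑ j, x i * y j * D i j p := by
    intro x y
    funext p
    conv_lhs => rw [hexp x, hexp y]
    simp only [map_sum, map_smul, LinearMap.sum_apply, LinearMap.smul_apply,
      Finset.sum_apply, Pi.smul_apply, hmul, smul_eq_mul, hD, Finset.mul_sum]
    rw [Finset.sum_comm]
    refine Finset.sum_congr rfl fun i _ => Finset.sum_congr rfl fun j _ =>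
      Finset.sum_congr rfl fun l _ => by ring
  have hGG : G * G⁻¹ = 1 := Matrix.mul_nonsing_inv G hGinv
  have hD0 : ∀ j p, D i0 j p = if j = p then 1 else 0 := by
    intro j p
    have h1 := congrFun (congrFun hGG j) p
    simp only [Matrix.mul_apply, Matrix.one_apply] at h1
    rw [hD]
    simp only [← hG]
    exact h1
  have hDsymm : ∀ i j p, D i j p = D j i p := by
    intro i j p; rw [hD]
    exact Finset.sum_congr rfl fun l _ => by rw [hsymm1]
  have hDF : ∀ i j p, D i j p = (F i * G⁻¹) j p := by
    intro i j p
    rw [hD, Matrix.mul_apply]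
    exact Finset.sum_congr rfl fun l _ => by rw [hF]
  have hunit : ∀ v : Fin n → ℂ, mul (Pi.single i0 1) v = v := by
    intro v
    rw [hmul' (Pi.single i0 1) v]
    funext p
    simp only [Pi.single_apply, ite_mul, one_mul, zero_mul, Finset.sum_ite_eq',
      Finset.mem_univ, if_true]
    simp [hD0, mul_ite]
  have hentry : ∀ i k j p, ((F i * G⁻¹) * (F k * G⁻¹)) j p = ∑ a, D i j a * D a k p := by
    intro i k j p
    rw [Matrix.mul_apply]
    refine Finset.sum_congr rfl fun a _ => ?_
    rw [← hDF, ← hDF, hDsymm a k]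
  have hcancel : ∀ M N : Matrix (Fin n) (Fin n) ℂ, M * G⁻¹ = N * G⁻¹ ↔ M = N := by
    intro M N
    constructor
    · intro h
      have := congrArg (fun X => X * G) h
      simpa [Matrix.mul_assoc, Matrix.nonsing_inv_mul G hGinv] using this
    · intro h; rw [h]
  have hkey : (∀ i j k p, (∑ a, D i j a * D a k p) = ∑ a, D j k a * D i a p) ↔
      (∀ i j, F i * G⁻¹ * F j = F j * G⁻¹ * F i) := by
    constructor
    · intro h i k
      rw [← hcancel, Matrix.mul_assoc (F i * G⁻¹), Matrix.mul_assoc (F k * G⁻¹)]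
      ext j p
      rw [hentry, hentry]
      calc (∑ a, D i j a * D a k p) = ∑ a, D j k a * D i a p := h i j k p
        _ = ∑ a, D k j a * D a i p := by
            refine Finset.sum_congr rfl fun a _ => ?_
            rw [hDsymm j k, hDsymm i a]
    · intro h i j k p
      have h2 : (F i * G⁻¹) * (F k * G⁻¹) = (F k * G⁻¹) * (F i * G⁻¹) := by
        rw [← Matrix.mul_assoc (F i * G⁻¹), ← Matrix.mul_assoc (F k * G⁻¹), h]
      have := congrFun (congrFun h2 j) p
      rw [hentry, hentry] at this
      calc (∑ a, D i j a * D a k p) = ∑ a, D k j a * D a i p := this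
        _ = ∑ a, D j k a * D i a p := by
            refine Finset.sum_congr rfl fun a _ => ?_
            rw [hDsymm k j, hDsymm a i]
  refine ⟨fun v => ⟨hunit v, ?_⟩, ?_⟩
  · rw [hmul' v (Pi.single i0 1)]
    funext p
    have hDi0 : ∀ i : Fin n, D i i0 p = if i = p then 1 else 0 := fun i => by
      rw [hDsymm, hD0]
    simp only [Pi.single_apply, mul_ite, ite_mul, mul_one, mul_zero, one_mul, zero_mul,
      Finset.sum_ite_eq', Finset.mem_univ, if_true, hDi0]
  · rw [← hkey]
    constructor
    · intro h i j k p
      have h2 := congrFun (h (Pi.single i 1) (Pi.single j 1) (Pi.single k 1)) p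
      rw [hmul' (mul (Pi.single i 1) (Pi.single j 1)) (Pi.single k 1),
        hmul' (Pi.single i 1) (mul (Pi.single j 1) (Pi.single k 1)),
        hmul' (Pi.single i 1) (Pi.single j 1),
        hmul' (Pi.single j 1) (Pi.single k 1)] at h2
      simp only [Pi.single_apply, ite_mul, mul_ite, one_mul, mul_one, zero_mul, mul_zero,
        Finset.sum_ite_eq', Finset.sum_ite_eq, Finset.mem_univ, if_true,
        Finset.sum_const_zero] at h2
      conv at h2 => rhs; rw [Finset.sum_comm]
      simp only [Finset.sum_ite_eq', Finset.mem_univ, if_true] at h2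
      exact h2
    · intro h x y z
      rw [hmul' (mul x y) z, hmul' x (mul y z), hmul' x y, hmul' y z]
      funext p
      show (∑ a, ∑ b, (∑ u, ∑ v, x u * y v * D u v a) * z b * D a b p)
        = ∑ a, ∑ b, x a * (∑ u, ∑ v, y u * z v * D u v b) * D a b p
      calc (∑ a, ∑ b, (∑ u, ∑ v, x u * y v * D u v a) * z b * D a b p)
          = ∑ a, ∑ b, ∑ u, ∑ v, x u * y v * z b * (D u v a * D a b p) := by
            refine Finset.sum_congr rfl fun a _ => Finset.sum_congr rfl fun b _ => ?_
            simp only [Finset.sum_mul]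
            exact Finset.sum_congr rfl fun u _ => Finset.sum_congr rfl fun v _ => by ring
        _ = ∑ u, ∑ v, ∑ b, ∑ a, x u * y v * z b * (D u v a * D a b p) :=
            wdvv_sum4_comm _
        _ = ∑ u, ∑ v, ∑ b, x u * y v * z b * (∑ a, D u v a * D a b p) := by
            simp only [← Finset.mul_sum]
        _ = ∑ u, ∑ v, ∑ b, x u * y v * z b * (∑ a, D v b a * D u a p) := by
            refine Finset.sum_congr rfl fun u _ => Finset.sum_congr rfl fun v _ =>
              Finset.sum_congr rfl fun b _ => ?_
            rw [h u v b p]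
        _ = ∑ u, ∑ v, ∑ b, ∑ a, x u * y v * z b * (D v b a * D u a p) := by
            simp only [Finset.mul_sum]
        _ = ∑ u, ∑ a, ∑ v, ∑ b, x u * y v * z b * (D v b a * D u a p) :=
            Finset.sum_congr rfl fun u _ => (wdvv_sum3_rot _).symm
        _ = ∑ a, ∑ b, x a * (∑ u, ∑ v, y u * z v * D u v b) * D a b p := by
            refine Finset.sum_congr rfl fun s _ => Finset.sum_congr rfl fun t _ => ?_
            simp only [Finset.mul_sum, Finset.sum_mul]
            exact Finset.sum_congr rfl fun u _ => Finset.sum_congr rfl fun v _ => by ring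
end

section
/- Let n ≥ 1, let U ⊆ ℂⁿ be open, and let F : ℂⁿ → ℂ be analytic on U with third partial derivatives c_{ijk}(z) = ∂_i ∂_j ∂_k F(z). Suppose there is a vector V ∈ ℂⁿ such that the matrix G with entries G_{ij} = Σ_k V_k c_{ijk}(z) is independent of z ∈ U, symmetric, and invertible. For each i define the matrix-valued function C_i(z) := F_i(z) G⁻¹, where (F_i(z))_{jk} = c_{ijk}(z), and assume the WDVV equations C_i(z) C_j(z) = C_j(z) C_i(z) hold for all i, j and all z ∈ U. Then for all z ∈ U and all indices i, j, l, m, p one has [C_i (∂_l C_m) + (∂_l C_i) C_m + (∂_m C_i) C_l]_{jp} = [C_l (∂_i C_j) + (∂_j C_l) C_i + (∂_i C_l) C_j]_{mp}, where ∂_l denotes the partial derivative with respect to z_l. (This is the coordinate form, in flat coordinates with vanishing Lie brackets, of the Hertling–Manin F-manifold integrability condition Lie_{X*Y}(*) = X*Lie_Y(*) + Y*Lie_X(*).) -/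
/-!
At each point the matrices `C_i = F_i G⁻¹` satisfy three identities: `(C_i)_{jp} = (C_j)_{ip}`,
since third partials of `F` commute; `(∂_l C_i)_{jp}` is symmetric in `l, i, j`, since `G` is
constant and fourth partials commute; and
`(∂_l C_i) C_m + C_i ∂_l C_m = (∂_l C_m) C_i + C_m ∂_l C_i`, the derivative of WDVV on the open
set `U`. The F-manifold identity follows from these alone: apply the differentiated WDVV with
`(l; i, m)` on the left and with `(i; l, j)` on the right, and match the remaining terms on the
two sides by the symmetries.
-/

open scoped Matrix

/-- The partial derivative of `f : ℂⁿ → ℂ` in the `i`-th coordinate direction. -/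
noncomputable def partialDerivC {n : ℕ} (i : Fin n) (f : (Fin n → ℂ) → ℂ)
    (z : Fin n → ℂ) : ℂ :=
  fderiv ℂ f z (Pi.single i 1)

open Filter Matrix Topology

/-- `D e a` stands for `∂_e C_a`. -/
theorem fManifold_identity_of_potential {ι R : Type*} [Fintype ι] [CommRing R]
    (C : ι → Matrix ι ι R) (D : ι → ι → Matrix ι ι R)
    (hC : ∀ a b, C a b = C b a) (hD : ∀ e a, D e a = D a e) (hD' : ∀ e a b, D e a b = D e b a)
    (hdWDVV : ∀ e a d, D e a * C d + C a * D e d = D e d * C a + C d * D e a)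
    (i j l m p : ι) :
    (C i * D l m + D l i * C m + D m i * C l) j p =
      (C l * D i j + D j l * C i + D i l * C j) m p := by
  have row : ∀ (X Y N : Matrix ι ι R) a b, X a = Y b → (X * N) a p = (Y * N) b p := by
    intro X Y N a b h
    rw [mul_apply, mul_apply, h]
  calc (C i * D l m + D l i * C m + D m i * C l) j p
      = (D l i * C m + C i * D l m) j p + (D m i * C l) j p := by
        simp only [Matrix.add_apply]; ring
    _ = (D l m * C i + C m * D l i) j p + (D m i * C l) j p := by rw [hdWDVV]
    _ = (D j l * C i) m p + (D i j * C l + C j * D i l) m p := by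
        simp only [Matrix.add_apply]
        rw [row (D l m) (D j l) _ _ _ (by rw [hD', hD l j]), row (C m) (C j) _ _ _ (hC m j),
          hD l i, row (D m i) (D i j) _ _ _ (by rw [hD m i, hD'])]
        ring
    _ = (D j l * C i) m p + (D i l * C j + C l * D i j) m p := by rw [hdWDVV i l j]
    _ = (C l * D i j + D j l * C i + D i l * C j) m p := by
        simp only [Matrix.add_apply]; ring

section PartialDeriv

variable {n : ℕ} {z : Fin n → ℂ} {f g : (Fin n → ℂ) → ℂ}

theorem Filter.EventuallyEq.partialDerivC_eq (h : f =ᶠ[𝓝 z] g) (i : Fin n) :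
    partialDerivC i f z = partialDerivC i g z := by
  rw [partialDerivC, partialDerivC, h.fderiv_eq]

theorem AnalyticAt.partialDerivC (hf : AnalyticAt ℂ f z) (i : Fin n) :
    AnalyticAt ℂ (partialDerivC i f) z :=
  ((ContinuousLinearMap.apply ℂ ℂ (Pi.single i 1 : Fin n → ℂ)).analyticAt _).comp hf.fderiv

theorem partialDerivC_comm (hf : AnalyticAt ℂ f z) (i j : Fin n) :
    partialDerivC i (partialDerivC j f) z = partialDerivC j (partialDerivC i f) z := by
  have hsymm : IsSymmSndFDerivAt ℂ f z := (hf.contDiffAt (n := 2)).isSymmSndFDerivAt (by simp)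
  have hsecond : ∀ a b : Fin n, partialDerivC a (partialDerivC b f) z =
      fderiv ℂ (fderiv ℂ f) z (Pi.single a 1) (Pi.single b 1) := by
    intro a b
    unfold partialDerivC
    rw [fderiv_clm_apply hf.fderiv.differentiableAt (differentiableAt_const _)]
    simp
  rw [hsecond, hsecond, hsymm]

theorem partialDerivC_comm_eventuallyEq (hf : AnalyticAt ℂ f z) (i j : Fin n) :
    partialDerivC i (partialDerivC j f) =ᶠ[𝓝 z] partialDerivC j (partialDerivC i f) :=
  hf.eventually_analyticAt.mono fun _ hw => partialDerivC_comm hw i j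

theorem partialDerivC_mul (hf : DifferentiableAt ℂ f z) (hg : DifferentiableAt ℂ g z)
    (i : Fin n) :
    partialDerivC i (fun w => f w * g w) z =
      partialDerivC i f z * g z + f z * partialDerivC i g z := by
  simp only [partialDerivC, fderiv_fun_mul hf hg, _root_.add_apply, _root_.smul_apply,
    smul_eq_mul]
  ring

theorem partialDerivC_sum {ι : Type*} (s : Finset ι) {f : ι → (Fin n → ℂ) → ℂ}
    (hf : ∀ r ∈ s, DifferentiableAt ℂ (f r) z) (i : Fin n) :
    partialDerivC i (fun w => ∑ r ∈ s, f r w) z = ∑ r ∈ s, partialDerivC i (f r) z := by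
  rw [partialDerivC, fderiv_fun_sum hf]
  simp [partialDerivC]

theorem partialDerivC_const (a : ℂ) (i : Fin n) : partialDerivC i (fun _ => a) z = 0 := by
  simp [partialDerivC]

end PartialDeriv

section MatrixPartialDeriv

variable {n : ℕ} {z : Fin n → ℂ} {ι κ ν : Type*}

noncomputable def matrixPartialDerivC (i : Fin n) (M : (Fin n → ℂ) → Matrix ι κ ℂ)
    (z : Fin n → ℂ) : Matrix ι κ ℂ :=
  Matrix.of fun j k => partialDerivC i (fun w => M w j k) z

theorem Filter.EventuallyEq.matrixPartialDerivC_eq {M N : (Fin n → ℂ) → Matrix ι κ ℂ}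
    (h : M =ᶠ[𝓝 z] N) (i : Fin n) :
    matrixPartialDerivC i M z = matrixPartialDerivC i N z := by
  ext j k
  exact EventuallyEq.partialDerivC_eq (h.mono fun _ hw => congrFun₂ hw j k) i

theorem matrixPartialDerivC_const (A : Matrix ι κ ℂ) (i : Fin n) :
    matrixPartialDerivC i (fun _ => A) z = 0 := by
  ext j k
  exact partialDerivC_const _ i

theorem matrixPartialDerivC_mul [Fintype κ] {M : (Fin n → ℂ) → Matrix ι κ ℂ}
    {N : (Fin n → ℂ) → Matrix κ ν ℂ} (hM : ∀ j k, DifferentiableAt ℂ (fun w => M w j k) z)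
    (hN : ∀ j k, DifferentiableAt ℂ (fun w => N w j k) z) (i : Fin n) :
    matrixPartialDerivC i (fun w => M w * N w) z =
      matrixPartialDerivC i M z * N z + M z * matrixPartialDerivC i N z := by
  ext j k
  simp only [matrixPartialDerivC, of_apply, Matrix.add_apply, mul_apply]
  rw [partialDerivC_sum _ fun q _ => (hM j q).fun_mul (hN q k), ← Finset.sum_add_distrib]
  exact Finset.sum_congr rfl fun q _ => partialDerivC_mul (hM j q) (hN q k) i

theorem matrixPartialDerivC_mul_comm [Fintype ι] {M N : (Fin n → ℂ) → Matrix ι ι ℂ}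
    (hMN : ∀ᶠ w in 𝓝 z, M w * N w = N w * M w)
    (hM : ∀ j k, DifferentiableAt ℂ (fun w => M w j k) z)
    (hN : ∀ j k, DifferentiableAt ℂ (fun w => N w j k) z) (i : Fin n) :
    matrixPartialDerivC i M z * N z + M z * matrixPartialDerivC i N z =
      matrixPartialDerivC i N z * M z + N z * matrixPartialDerivC i M z := by
  rw [← matrixPartialDerivC_mul hM hN, ← matrixPartialDerivC_mul hN hM]
  exact EventuallyEq.matrixPartialDerivC_eq hMN i

end MatrixPartialDeriv

section StructureMatrix

variable {n : ℕ} {z : Fin n → ℂ} {F : (Fin n → ℂ) → ℂ}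

noncomputable def structureMatrix (F : (Fin n → ℂ) → ℂ) (A : Matrix (Fin n) (Fin n) ℂ)
    (a : Fin n) (w : Fin n → ℂ) : Matrix (Fin n) (Fin n) ℂ :=
  Matrix.of (fun b r => partialDerivC a (partialDerivC b (partialDerivC r F)) w) * A

theorem structureMatrix_row_comm (hF : AnalyticAt ℂ F z) (A : Matrix (Fin n) (Fin n) ℂ)
    (a b : Fin n) : structureMatrix F A a z b = structureMatrix F A b z a := by
  funext q
  simp only [structureMatrix, mul_apply, of_apply]
  exact Finset.sum_congr rfl fun r _ => by rw [partialDerivC_comm (hF.partialDerivC r) a b]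

theorem analyticAt_structureMatrix_apply (hF : AnalyticAt ℂ F z) (A : Matrix (Fin n) (Fin n) ℂ)
    (a b q : Fin n) : AnalyticAt ℂ (fun w => structureMatrix F A a w b q) z := by
  simp only [structureMatrix, mul_apply, of_apply]
  exact Finset.analyticAt_fun_sum _ fun r _ =>
    (((hF.partialDerivC r).partialDerivC b).partialDerivC a).mul analyticAt_const

theorem matrixPartialDerivC_structureMatrix (hF : AnalyticAt ℂ F z)
    (A : Matrix (Fin n) (Fin n) ℂ) (e a : Fin n) :
    matrixPartialDerivC e (structureMatrix F A a) z =
      Matrix.of (fun b r =>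
        partialDerivC e (partialDerivC a (partialDerivC b (partialDerivC r F))) z) * A := by
  have hleibniz := matrixPartialDerivC_mul
    (M := fun w => Matrix.of fun b r => partialDerivC a (partialDerivC b (partialDerivC r F)) w)
    (N := fun _ => A)
    (fun b r => (((hF.partialDerivC r).partialDerivC b).partialDerivC a).differentiableAt)
    (fun _ _ => differentiableAt_const _) e
  rw [matrixPartialDerivC_const, mul_zero, add_zero] at hleibniz
  exact hleibniz

theorem matrixPartialDerivC_structureMatrix_comm (hF : AnalyticAt ℂ F z)
    (A : Matrix (Fin n) (Fin n) ℂ) (e a : Fin n) :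
    matrixPartialDerivC e (structureMatrix F A a) z =
      matrixPartialDerivC a (structureMatrix F A e) z := by
  rw [matrixPartialDerivC_structureMatrix hF, matrixPartialDerivC_structureMatrix hF]
  congr 1
  ext b r
  exact partialDerivC_comm ((hF.partialDerivC r).partialDerivC b) e a

theorem matrixPartialDerivC_structureMatrix_row_comm (hF : AnalyticAt ℂ F z)
    (A : Matrix (Fin n) (Fin n) ℂ) (e a b : Fin n) :
    matrixPartialDerivC e (structureMatrix F A a) z b =
      matrixPartialDerivC e (structureMatrix F A b) z a := by
  rw [matrixPartialDerivC_structureMatrix hF, matrixPartialDerivC_structureMatrix hF]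
  funext q
  simp only [mul_apply, of_apply]
  exact Finset.sum_congr rfl fun r _ => by
    rw [(partialDerivC_comm_eventuallyEq (hF.partialDerivC r) a b).partialDerivC_eq e]

end StructureMatrix

theorem fManifold_identity_of_wdvv_and_constant_metric_general
    {n : ℕ}
    (U : Set (Fin n → ℂ)) (hU : IsOpen U)
    (F : (Fin n → ℂ) → ℂ) (hFan : AnalyticOnNhd ℂ F U)
    (c : Fin n → Fin n → Fin n → (Fin n → ℂ) → ℂ)
    (hc : ∀ i j k z, c i j k z = partialDerivC i (partialDerivC j (partialDerivC k F)) z)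
    (G : Matrix (Fin n) (Fin n) ℂ)
    (Fmat : Fin n → (Fin n → ℂ) → Matrix (Fin n) (Fin n) ℂ)
    (hFmat : ∀ i z j k, Fmat i z j k = c i j k z)
    (C : Fin n → (Fin n → ℂ) → Matrix (Fin n) (Fin n) ℂ)
    (hC : ∀ i z, C i z = Fmat i z * G⁻¹)
    (hWDVV : ∀ z ∈ U, ∀ i j, C i z * C j z = C j z * C i z)
    (DC : Fin n → Fin n → (Fin n → ℂ) → Matrix (Fin n) (Fin n) ℂ)
    (hDC : ∀ l m z j p, DC l m z j p = partialDerivC l (fun w => C m w j p) z) :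
    ∀ z ∈ U, ∀ i j l m p,
      (C i z * DC l m z + DC l i z * C m z + DC m i z * C l z) j p =
      (C l z * DC i j z + DC j l z * C i z + DC i l z * C j z) m p := by
  intro z hz i j l m p
  have hF := hFan z hz
  have hCF : ∀ a, C a = structureMatrix F G⁻¹ a := fun a => funext fun w => by
    rw [hC, structureMatrix]
    congr 1
    ext b r
    rw [hFmat, hc, of_apply]
  have hDCF : ∀ e a, DC e a z = matrixPartialDerivC e (structureMatrix F G⁻¹ a) z :=
    fun e a => by ext b q; rw [hDC, ← hCF]; rfl
  have hdiff : ∀ a b q, DifferentiableAt ℂ (fun w => structureMatrix F G⁻¹ a w b q) z :=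
    fun a b q => (analyticAt_structureMatrix_apply hF _ a b q).differentiableAt
  have hcommute : ∀ a d, ∀ᶠ w in 𝓝 z,
      structureMatrix F G⁻¹ a w * structureMatrix F G⁻¹ d w =
        structureMatrix F G⁻¹ d w * structureMatrix F G⁻¹ a w := fun a d => by
    filter_upwards [hU.mem_nhds hz] with w hw
    simpa only [hCF] using hWDVV w hw a d
  simp only [hCF, hDCF]
  exact fManifold_identity_of_potential (fun a => structureMatrix F G⁻¹ a z)
    (fun e a => matrixPartialDerivC e (structureMatrix F G⁻¹ a) z)
    (structureMatrix_row_comm hF _) (matrixPartialDerivC_structureMatrix_comm hF _)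
    (matrixPartialDerivC_structureMatrix_row_comm hF _)
    (fun e a d => matrixPartialDerivC_mul_comm (hcommute a d) (hdiff a) (hdiff d) e) i j l m p

/-- If `F` is analytic on an open set `U ⊆ ℂⁿ`, the matrix
`G_{ij} = Σ_k V_k ∂_i∂_j∂_k F(z)` is constant on `U`, symmetric and invertible, and the
structure-constant matrices `C_i(z) = F_i(z) G⁻¹` pairwise commute (WDVV), then the
coordinate form of the Hertling–Manin F-manifold condition holds:
`[C_i ∂_l C_m + (∂_l C_i) C_m + (∂_m C_i) C_l]_{jp} = [C_l ∂_i C_j + (∂_j C_l) C_i + (∂_i C_l) C_j]_{mp}`. -/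
theorem fManifold_identity_of_wdvv_and_constant_metric
    {n : ℕ} (hn : 0 < n)
    (U : Set (Fin n → ℂ)) (hU : IsOpen U)
    (F : (Fin n → ℂ) → ℂ) (hFan : AnalyticOnNhd ℂ F U)
    (c : Fin n → Fin n → Fin n → (Fin n → ℂ) → ℂ)
    (hc : ∀ i j k z, c i j k z = partialDerivC i (partialDerivC j (partialDerivC k F)) z)
    (V : Fin n → ℂ)
    (G : Matrix (Fin n) (Fin n) ℂ)
    (hGconst : ∀ z ∈ U, ∀ i j, (∑ k, V k * c i j k z) = G i j)
    (hGsymm : ∀ i j, G i j = G j i)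
    (hGinv : IsUnit G.det)
    (Fmat : Fin n → (Fin n → ℂ) → Matrix (Fin n) (Fin n) ℂ)
    (hFmat : ∀ i z j k, Fmat i z j k = c i j k z)
    (C : Fin n → (Fin n → ℂ) → Matrix (Fin n) (Fin n) ℂ)
    (hC : ∀ i z, C i z = Fmat i z * G⁻¹)
    (hWDVV : ∀ z ∈ U, ∀ i j, C i z * C j z = C j z * C i z)
    (DC : Fin n → Fin n → (Fin n → ℂ) → Matrix (Fin n) (Fin n) ℂ)
    (hDC : ∀ l m z j p, DC l m z j p = partialDerivC l (fun w => C m w j p) z) :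
    ∀ z ∈ U, ∀ i j l m p,
      (C i z * DC l m z + DC l i z * C m z + DC m i z * C l z) j p =
      (C l z * DC i j z + DC j l z * C i z + DC i l z * C j z) m p :=
  fManifold_identity_of_wdvv_and_constant_metric_general U hU F hFan c hc G Fmat hFmat C hC hWDVV DC
    hDC
end

section
/- Let n ≥ 1 and let z_1, …, z_n be pairwise distinct nonzero complex numbers. Define the totally symmetric array c_{ijk} by: c_{iii} = 1/z_i + Σ_{l ≠ i} 1/(z_i − z_l); c_{iij} = c_{iji} = c_{jii} = −1/(z_i − z_j) for i ≠ j; and c_{ijk} = 0 when i, j, k are pairwise distinct. Let F_i be the matrix with entries (F_i)_{jk} = c_{ijk} and let F_E := Σ_k z_k F_k. Then F_E is invertible and the generalized Witten–Dijkgraaf–Verlinde–Verlinde equations F_i F_E⁻¹ F_j = F_j F_E⁻¹ F_i hold for all i, j. -/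
open scoped Matrix
open Finset

namespace TodaAux

variable {n : ℕ}

noncomputable def vv (z : Fin n → ℂ) (i k : Fin n) : ℂ :=
  if k = i then 0 else (z i - z k)⁻¹

noncomputable def al (z : Fin n → ℂ) (i : Fin n) : ℂ := (z i)⁻¹ + ∑ k, vv z i k

noncomputable def cf (z : Fin n → ℂ) (i a b : Fin n) : ℂ :=
  if a = i then (if b = i then al z i else -(z i - z b)⁻¹)
  else if b = i then -(z i - z a)⁻¹
  else if a = b then (z i - z a)⁻¹ else 0

variable (z : Fin n → ℂ)

lemma cf_iii (i : Fin n) : cf z i i i = al z i := by simp [cf]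

lemma cf_row {i b : Fin n} (h : b ≠ i) : cf z i i b = -(z i - z b)⁻¹ := by simp [cf, h]

lemma cf_col {i a : Fin n} (h : a ≠ i) : cf z i a i = -(z i - z a)⁻¹ := by simp [cf, h]

lemma cf_dg {i a : Fin n} (h : a ≠ i) : cf z i a a = (z i - z a)⁻¹ := by simp [cf, h]

lemma cf_zero {i a b : Fin n} (h1 : a ≠ i) (h2 : b ≠ i) (h3 : a ≠ b) : cf z i a b = 0 := by
  simp [cf, h1, h2, h3]

lemma cf_symm (i a b : Fin n) : cf z i a b = cf z i b a := by
  unfold cf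
  by_cases h1 : a = i <;> by_cases h2 : b = i <;> by_cases h3 : a = b <;>
    simp_all [eq_comm]

lemma sum_two {f : Fin n → ℂ} {p q : Fin n} (hpq : p ≠ q)
    (h0 : ∀ k, k ≠ p → k ≠ q → f k = 0) : ∑ k, f k = f p + f q := by
  have h1 : f p + ∑ k ∈ univ.erase p, f k = ∑ k, f k :=
    Finset.add_sum_erase _ f (mem_univ p)
  have h2 : f q + ∑ k ∈ (univ.erase p).erase q, f k = ∑ k ∈ univ.erase p, f k :=
    Finset.add_sum_erase _ f (Finset.mem_erase.mpr ⟨hpq.symm, Finset.mem_univ q⟩)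
  have h3 : ∑ k ∈ (univ.erase p).erase q, f k = 0 :=
    Finset.sum_eq_zero (fun k hk => by
      simp only [Finset.mem_erase] at hk
      exact h0 k hk.2.1 hk.1)
  rw [← h1, ← h2, h3]; ring

lemma sum_split (f : Fin n → ℂ) {p q : Fin n} (hpq : p ≠ q) :
    ∑ k, f k = f p + f q + ∑ k ∈ (univ.erase p).erase q, f k := by
  have h1 : f p + ∑ k ∈ univ.erase p, f k = ∑ k, f k :=
    Finset.add_sum_erase _ f (mem_univ p)
  have h2 : f q + ∑ k ∈ (univ.erase p).erase q, f k = ∑ k ∈ univ.erase p, f k :=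
    Finset.add_sum_erase _ f (Finset.mem_erase.mpr ⟨hpq.symm, Finset.mem_univ q⟩)
  rw [← h1, ← h2]; ring

lemma sum_tail {i j : Fin n} (hij : j ≠ i) :
    ∑ k ∈ (univ.erase i).erase j, (z i - z k)⁻¹ = (∑ k, vv z i k) - (z i - z j)⁻¹ := by
  have h1 : ∑ k ∈ univ.erase i, vv z i k = ∑ k, vv z i k :=
    Finset.sum_erase _ (by simp [vv])
  have h2 : ∑ k ∈ univ.erase i, vv z i k = ∑ k ∈ univ.erase i, (z i - z k)⁻¹ :=
    Finset.sum_congr rfl (fun k hk => by simp [vv, (Finset.mem_erase.mp hk).1])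
  have h3 : (z i - z j)⁻¹ + ∑ k ∈ (univ.erase i).erase j, (z i - z k)⁻¹
      = ∑ k ∈ univ.erase i, (z i - z k)⁻¹ :=
    Finset.add_sum_erase _ (fun k => (z i - z k)⁻¹) (Finset.mem_erase.mpr ⟨hij, Finset.mem_univ j⟩)
  rw [← h1, h2, ← h3]; ring



noncomputable def Tf (i j a b : Fin n) : ℂ :=
  if a = i then
    (if b = i then -(z i - z j)⁻¹ * (z i - z j)⁻¹ - al z i * (z i - z j)⁻¹
     else if b = j then 2 * ((z i - z j)⁻¹ * (z i - z j)⁻¹) - (z i * z j)⁻¹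
     else (z i - z j)⁻¹ * (z i - z b)⁻¹)
  else if a = j then
    (if b = i then 2 * ((z i - z j)⁻¹ * (z i - z j)⁻¹)
     else if b = j then -(z i - z j)⁻¹ * (z i - z j)⁻¹ + al z j * (z i - z j)⁻¹
     else -((z i - z j)⁻¹ * (z j - z b)⁻¹))
  else if b = i then (z i - z j)⁻¹ * (z i - z a)⁻¹
  else if b = j then -((z i - z j)⁻¹ * (z j - z a)⁻¹)
  else if a = b then (z i - z a)⁻¹ * (z j - z a)⁻¹
  else 0

lemma Slem (hz0 : ∀ i, z i ≠ 0) (hzd : ∀ i j, i ≠ j → z i ≠ z j)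
    {i j : Fin n} (hij : i ≠ j) (a b : Fin n) :
    ∑ k, cf z i a k * cf z j k b = Tf z i j a b := by
  have hsub : ∀ {p q : Fin n}, p ≠ q → z p - z q ≠ 0 :=
    fun h => sub_ne_zero.mpr (hzd _ _ h)
  have hji : j ≠ i := hij.symm
  have e1 := hsub hij
  have e2 := hsub hji
  by_cases hai : a = i
  · simp only [hai]
    by_cases hbi : b = i
    · -- case a = i, b = i
      simp only [hbi]
      rw [sum_two hij (fun k hki hkj => by
        rw [cf_zero z hkj hij hki, mul_zero])]
      rw [cf_iii, cf_dg z hij, cf_row z hji, cf_row z hij]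
      simp [Tf, hji]
      field_simp
      ring
    · by_cases hbj : b = j
      · -- case a = i, b = j : full support
        simp only [hbj]
        rw [sum_split (fun k => cf z i i k * cf z j k j) hij]
        rw [cf_iii, cf_col z hij, cf_row z hji, cf_iii]
        have hcongr : ∑ k ∈ (univ.erase i).erase j, cf z i i k * cf z j k j
            = ∑ k ∈ (univ.erase i).erase j,
              ((z i - z j)⁻¹ * ((z j - z k)⁻¹ - (z i - z k)⁻¹)) := by
          refine Finset.sum_congr rfl (fun k hk => ?_)
          have hkj : k ≠ j := (Finset.mem_erase.mp hk).1
          have hki : k ≠ i := (Finset.mem_erase.mp (Finset.mem_erase.mp hk).2).1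
          rw [cf_row z hki, cf_col z hkj]
          have h2 := hsub (Ne.symm hki)
          have h3 := hsub (Ne.symm hkj)
          field_simp
          ring
        rw [hcongr, ← Finset.mul_sum, Finset.sum_sub_distrib]
        have ht1 : ∑ k ∈ (univ.erase i).erase j, (z j - z k)⁻¹
            = (∑ k, vv z j k) - (z j - z i)⁻¹ := by
          rw [Finset.erase_right_comm]; exact sum_tail z hij
        have ht2 : ∑ k ∈ (univ.erase i).erase j, (z i - z k)⁻¹
            = (∑ k, vv z i k) - (z i - z j)⁻¹ := sum_tail z hji
        rw [ht1, ht2]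
        simp [Tf, hji]
        unfold al
        have h2 := hz0 i
        have h3 := hz0 j
        field_simp
        ring
      · -- case a = i, b ∉ {i,j}
        rw [sum_two (p := j) (q := b) (fun h => hbj h.symm) (fun k hkj hkb => by
          rw [cf_zero z hkj hbj hkb, mul_zero])]
        rw [cf_row z hji, cf_row z hbj, cf_row z hbi, cf_dg z hbj]
        simp [Tf, hbi, hbj]
        have h2 := hsub (fun h : i = b => hbi h.symm)
        have h3 := hsub (fun h : j = b => hbj h.symm)
        field_simp
        ring
  · by_cases haj : a = j
    · simp only [haj]
      -- a = j (and j ≠ i)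
      by_cases hbi : b = i
      · simp only [hbi]
        rw [sum_two hij (fun k hki hkj => by
          rw [cf_zero z hji hki hkj.symm, zero_mul])]
        rw [cf_col z hji, cf_dg z hij, cf_dg z hji, cf_row z hij]
        simp [Tf, hji]
        try field_simp
        try ring
      · by_cases hbj : b = j
        · simp only [hbj]
          rw [sum_two hij (fun k hki hkj => by
            rw [cf_zero z hji hki hkj.symm, zero_mul])]
          rw [cf_col z hji, cf_col z hij, cf_dg z hji, cf_iii]
          simp [Tf, hji]
          try field_simp
          try ring
        · -- a = j, b ∉ {i,j}
          rw [sum_two hij (fun k hki hkj => by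
            rw [cf_zero z hji hki hkj.symm, zero_mul])]
          rw [cf_col z hji, cf_dg z hji,
            cf_zero z hij hbj (fun h => hbi h.symm), cf_row z hbj]
          simp [Tf, hji, hbi, hbj]
          try ring
    · -- a ∉ {i,j}
      have hia : i ≠ a := fun h => hai h.symm
      have e3 := hsub hia
      by_cases hbi : b = i
      · simp only [hbi]
        rw [sum_two (p := i) (q := a) hia (fun k hki hka => by
          rw [cf_zero z hai hki (fun h => hka h.symm), zero_mul])]
        rw [cf_col z hai, cf_dg z hij, cf_dg z hai, cf_zero z haj hij hai]
        simp [Tf, hai, haj]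
        field_simp
        ring
      · by_cases hbj : b = j
        · simp only [hbj]
          rw [sum_two (p := i) (q := a) hia (fun k hki hka => by
            rw [cf_zero z hai hki (fun h => hka h.symm), zero_mul])]
          rw [cf_col z hai, cf_col z hij, cf_dg z hai, cf_col z haj]
          simp [Tf, hai, haj, hji]
          have h3 := hsub (fun h : j = a => haj h.symm)
          field_simp
          ring
        · by_cases hab : a = b
          · simp only [← hab]
            rw [sum_two (p := i) (q := a) hia (fun k hki hka => by
              rw [cf_zero z hai hki (fun h => hka h.symm), zero_mul])]
            rw [cf_col z hai, cf_zero z hij haj hia, cf_dg z hai, cf_dg z haj]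
            simp [Tf, hai, haj]
          · rw [sum_two (p := i) (q := a) hia (fun k hki hka => by
              rw [cf_zero z hai hki (fun h => hka h.symm), zero_mul])]
            rw [cf_col z hai, cf_zero z hij hbj (fun h => hbi h.symm),
              cf_dg z hai, cf_zero z haj hbj hab]
            simp [Tf, hai, haj, hbi, hbj, hab]



lemma vv_sum (i : Fin n) : ∑ k, vv z i k = ∑ k ∈ univ.erase i, (z i - z k)⁻¹ := by
  rw [← Finset.sum_erase univ (show vv z i i = 0 by simp [vv])]
  exact Finset.sum_congr rfl (fun k hk => by simp [vv, (Finset.mem_erase.mp hk).1])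

lemma rowSum (i a : Fin n) : ∑ k, cf z i a k = if a = i then (z i)⁻¹ else 0 := by
  by_cases hai : a = i
  · simp only [hai, eq_self_iff_true, if_true]
    rw [← Finset.add_sum_erase univ (fun k => cf z i i k) (Finset.mem_univ i), cf_iii]
    have hrest : ∑ k ∈ univ.erase i, cf z i i k
        = -∑ k ∈ univ.erase i, (z i - z k)⁻¹ := by
      rw [← Finset.sum_neg_distrib]
      exact Finset.sum_congr rfl (fun k hk => cf_row z (Finset.mem_erase.mp hk).1)
    rw [hrest]
    unfold al
    rw [vv_sum]
    ring
  · rw [if_neg hai]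
    rw [sum_two (p := i) (q := a) (fun h => hai h.symm) (fun k hki hka =>
      cf_zero z hai hki (fun h => hka h.symm))]
    rw [cf_col z hai, cf_dg z hai]
    ring

lemma comm_key (hz0 : ∀ i, z i ≠ 0) (hzd : ∀ i j, i ≠ j → z i ≠ z j)
    {i j : Fin n} (hij : i ≠ j) (a b : Fin n) :
    (∑ k, cf z i a k * cf z j k b) - (∑ k, cf z j a k * cf z i k b)
    = (if a = j then 1 else 0) * (if b = i then 1 else 0) * ((z i)⁻¹ * (z j)⁻¹)
      - (if a = i then 1 else 0) * (if b = j then 1 else 0) * ((z i)⁻¹ * (z j)⁻¹) := by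
  have hji : j ≠ i := hij.symm
  have hsub : ∀ {p q : Fin n}, p ≠ q → z p - z q ≠ 0 :=
    fun h => sub_ne_zero.mpr (hzd _ _ h)
  have e1 := hsub hij
  have e2 := hsub hji
  have e3 := hz0 i
  have e4 := hz0 j
  have hnu : (z j - z i)⁻¹ = -(z i - z j)⁻¹ := by
    rw [show z j - z i = -(z i - z j) by ring, inv_neg]
  rw [Slem z hz0 hzd hij a b, Slem z hz0 hzd hji a b]
  by_cases hai : a = i
  · by_cases hbi : b = i
    · simp [Tf, hai, hbi, hij, hji, hnu, mul_inv] <;> try ring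
    · by_cases hbj : b = j
      · simp [Tf, hai, hbj, hij, hji, hnu, mul_inv] <;> try ring
      · simp [Tf, hai, hbi, hbj, hij, hji, hnu, mul_inv] <;> try ring
  · by_cases haj : a = j
    · by_cases hbi : b = i
      · simp [Tf, haj, hbi, hij, hji, hnu, mul_inv] <;> try ring
      · by_cases hbj : b = j
        · simp [Tf, haj, hbj, hij, hji, hnu, mul_inv] <;> try ring
        · simp [Tf, haj, hbi, hbj, hij, hji, hnu, mul_inv] <;> try ring
    · by_cases hbi : b = i
      · simp [Tf, hai, haj, hbi, hij, hji, hnu, mul_inv] <;> try ring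
      · by_cases hbj : b = j
        · simp [Tf, hai, haj, hbj, hij, hji, hnu, mul_inv] <;> try ring
        · by_cases hab : a = b
          · simp [Tf, hai, haj, hbi, hbj, hab, hij, hji, hnu, mul_inv] <;> try ring
          · simp [Tf, hai, haj, hbi, hbj, hab, hij, hji, hnu, mul_inv] <;> try ring

end TodaAux


open TodaAux

/-- For pairwise distinct nonzero `z₁, …, zₙ ∈ ℂ`, the totally symmetric
array `c_{ijk}` of third derivatives of the open Toda chain prepotential satisfies the
generalized WDVV equations `F_i F_E⁻¹ F_j = F_j F_E⁻¹ F_i` with `F_E = Σ_k z_k F_k`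
invertible. -/
theorem toda_prepotential_satisfies_wdvv
    {n : ℕ} (hn : 0 < n)
    (z : Fin n → ℂ)
    (hz0 : ∀ i, z i ≠ 0)
    (hzdist : ∀ i j, i ≠ j → z i ≠ z j)
    (c : Fin n → Fin n → Fin n → ℂ)
    (hdiag : ∀ i, c i i i = 1 / z i + ∑ l ∈ Finset.univ.erase i, 1 / (z i - z l))
    (hii : ∀ i j, i ≠ j → c i i j = -(1 / (z i - z j)) ∧ c i j i = -(1 / (z i - z j)) ∧
      c j i i = -(1 / (z i - z j)))
    (hoff : ∀ i j k, i ≠ j → j ≠ k → i ≠ k → c i j k = 0)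
    (F : Fin n → Matrix (Fin n) (Fin n) ℂ)
    (hF : ∀ i j k, F i j k = c i j k)
    (FE : Matrix (Fin n) (Fin n) ℂ)
    (hFE : FE = ∑ k, z k • F k) :
    IsUnit FE.det ∧ ∀ i j, F i * FE⁻¹ * F j = F j * FE⁻¹ * F i := by
  classical
  have hsub : ∀ {p q : Fin n}, p ≠ q → z p - z q ≠ 0 :=
    fun h => sub_ne_zero.mpr (hzdist _ _ h)
  -- the entries of F are given by cf
  have hcf : ∀ p a b, F p a b = cf z p a b := by
    intro p a b
    rw [hF]
    by_cases hap : a = p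
    · by_cases hbp : b = p
      · rw [hap, hbp, hdiag p, cf_iii, al, vv_sum, one_div]
        congr 1
        exact Finset.sum_congr rfl (fun l _ => one_div _)
      · rw [hap, (hii p b (fun h => hbp h.symm)).1, cf_row z hbp, one_div]
    · by_cases hbp : b = p
      · rw [hbp, (hii p a (fun h => hap h.symm)).2.1, cf_col z hap, one_div]
      · by_cases hab : a = b
        · rw [← hab, (hii a p hap).2.2, cf_dg z hap, one_div,
            show z a - z p = -(z p - z a) by ring, inv_neg, neg_neg]
        · rw [hoff p a b (fun h => hap h.symm) hab (fun h => hbp h.symm),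
            cf_zero z hap hbp hab]
  set J : Matrix (Fin n) (Fin n) ℂ := Matrix.of (fun _ _ => 1) with hJ
  -- closed form of FE
  have hFE' : FE = ((n : ℂ) + 1) • (1 : Matrix (Fin n) (Fin n) ℂ) - J := by
    rw [hFE]
    ext a b
    rw [Matrix.sum_apply]
    simp only [Matrix.smul_apply, smul_eq_mul, Matrix.sub_apply, hJ, Matrix.of_apply]
    simp only [hcf]
    by_cases hab : b = a
    · subst hab
      simp only [Matrix.one_apply_eq]
      rw [← Finset.add_sum_erase Finset.univ (fun k => z k * cf z k b b)
        (Finset.mem_univ b), cf_iii]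
      have hrest : ∑ k ∈ Finset.univ.erase b, z k * cf z k b b
          = ∑ k ∈ Finset.univ.erase b, (1 - z b * (z b - z k)⁻¹) := by
        refine Finset.sum_congr rfl (fun k hk => ?_)
        have hbk : b ≠ k := fun h => (Finset.mem_erase.mp hk).1 h.symm
        rw [cf_dg z hbk]
        have h1 := hsub hbk
        have h2 := hsub (Ne.symm hbk)
        field_simp
        ring
      rw [hrest, Finset.sum_sub_distrib, Finset.sum_const,
        Finset.card_erase_of_mem (Finset.mem_univ b), Finset.card_univ, Fintype.card_fin,
        al, vv_sum, mul_add, Finset.mul_sum, mul_inv_cancel₀ (hz0 b)]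
      have hcast : ((n - 1 : ℕ) : ℂ) = (n : ℂ) - 1 := by
        rw [Nat.cast_sub hn]; norm_num
      rw [nsmul_eq_mul, hcast]
      ring
    · have han : a ≠ b := fun h => hab h.symm
      rw [Matrix.one_apply_ne han]
      rw [sum_two (p := a) (q := b) han (fun k hka hkb => by
        rw [cf_zero z (Ne.symm hka) (Ne.symm hkb) han, mul_zero])]
      rw [cf_row z hab, cf_col z han]
      have h1 := hsub han
      have h2 := hsub (Ne.symm han)
      field_simp
      ring
  have hone : ((n : ℂ) + 1) ≠ 0 := by
    have h : ((n : ℂ) + 1) = ((n + 1 : ℕ) : ℂ) := by push_cast; ring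
    rw [h]
    exact_mod_cast Nat.succ_ne_zero n
  have hJJ : J * J = (n : ℂ) • J := by
    ext a b
    simp [hJ, Matrix.mul_apply, Finset.card_univ]
  have hright : FE * (((n : ℂ) + 1)⁻¹ • (1 + J)) = 1 := by
    rw [hFE', Matrix.mul_smul]
    have key : (((n : ℂ) + 1) • (1 : Matrix (Fin n) (Fin n) ℂ) - J) * (1 + J)
        = ((n : ℂ) + 1) • (1 : Matrix (Fin n) (Fin n) ℂ) := by
      rw [mul_add, mul_one, sub_mul, Matrix.smul_mul, one_mul, hJJ]
      have h0 : ((n : ℂ) + 1) • J - ((n : ℂ) • J + J) = 0 := by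
        rw [add_smul, one_smul]; abel
      calc ((n : ℂ) + 1) • (1 : Matrix (Fin n) (Fin n) ℂ) - J + (((n : ℂ) + 1) • J - (n : ℂ) • J)
          = ((n : ℂ) + 1) • (1 : Matrix (Fin n) (Fin n) ℂ)
            + (((n : ℂ) + 1) • J - ((n : ℂ) • J + J)) := by abel
        _ = ((n : ℂ) + 1) • (1 : Matrix (Fin n) (Fin n) ℂ) := by rw [h0, add_zero]
    rw [key, smul_smul, inv_mul_cancel₀ hone, one_smul]
  refine ⟨Matrix.isUnit_det_of_right_inverse hright, ?_⟩
  intro i j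
  rcases eq_or_ne i j with rfl | hij
  · rfl
  rw [Matrix.inv_eq_right_inv hright]
  rw [Matrix.mul_smul, Matrix.smul_mul, Matrix.mul_smul, Matrix.smul_mul]
  congr 1
  -- reduce to the key identity
  have hrowJ : ∀ (p : Fin n) (a m : Fin n),
      (F p * J) a m = (if a = p then (z p)⁻¹ else 0) := by
    intro p a m
    rw [Matrix.mul_apply]
    simp only [hJ, Matrix.of_apply, mul_one]
    simp only [hcf]
    exact rowSum z p a
  have hJF : ∀ (p q : Fin n) (a b : Fin n),
      (F p * J * F q) a b = (if a = p then (z p)⁻¹ else 0) * (if b = q then (z q)⁻¹ else 0) := by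
    intro p q a b
    rw [Matrix.mul_apply]
    have h1 : ∀ m, (F p * J) a m * F q m b
        = (if a = p then (z p)⁻¹ else 0) * cf z q m b := fun m => by
      rw [hrowJ, hcf]
    rw [Finset.sum_congr rfl (fun m _ => h1 m), ← Finset.mul_sum]
    congr 1
    rw [Finset.sum_congr rfl (fun m _ => cf_symm z q m b)]
    exact rowSum z q b
  rw [mul_add, mul_one, add_mul, mul_add, mul_one, add_mul]
  ext a b
  simp only [Matrix.add_apply]
  rw [hJF i j a b, hJF j i a b]
  rw [Matrix.mul_apply, Matrix.mul_apply]
  simp only [hcf]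
  have hc := comm_key z hz0 hzdist hij a b
  have hd1 : (if a = j then (1:ℂ) else 0) * (if b = i then (1:ℂ) else 0) * ((z i)⁻¹ * (z j)⁻¹)
      = (if a = j then (z j)⁻¹ else 0) * (if b = i then (z i)⁻¹ else 0) := by
    by_cases h1 : a = j <;> by_cases h2 : b = i <;> simp [h1, h2] <;> ring
  have hd2 : (if a = i then (1:ℂ) else 0) * (if b = j then (1:ℂ) else 0) * ((z i)⁻¹ * (z j)⁻¹)
      = (if a = i then (z i)⁻¹ else 0) * (if b = j then (z j)⁻¹ else 0) := by
    by_cases h1 : a = i <;> by_cases h2 : b = j <;> simp [h1, h2] <;> ring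
  rw [hd1, hd2] at hc
  linear_combination hc
end

section
/- Let n ≥ 1 and let z_1, …, z_n be pairwise distinct nonzero complex numbers, and define c_{ijk} by: c_{iii} = 1/z_i + Σ_{l ≠ i} 1/(z_i − z_l); c_{iij} = c_{iji} = c_{jii} = −1/(z_i − z_j) for i ≠ j; c_{ijk} = 0 for pairwise distinct i, j, k. Then the matrix F_E with entries [F_E]_{ij} = Σ_k z_k c_{ijk} satisfies F_E = (n+1)·Id − J, where J is the n×n all-ones matrix; in particular F_E is independent of z, invertible, and F_E⁻¹ = (Id + J)/(n+1). -/
open scoped Matrix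

/-- For the third-derivative array `c_{ijk}` of the open Toda prepotential
at pairwise distinct nonzero `z₁, …, zₙ`, the matrix `[F_E]_{ij} = Σ_k z_k c_{ijk}`
equals `(n+1)·Id − J` with `J` the all-ones matrix; in particular it is independent of
`z`, invertible, and `F_E⁻¹ = (Id + J)/(n+1)`. -/
theorem toda_metric_is_constant_and_invertible
    {n : ℕ} (hn : 0 < n)
    (z : Fin n → ℂ)
    (hz0 : ∀ i, z i ≠ 0)
    (hzdist : ∀ i j, i ≠ j → z i ≠ z j)
    (c : Fin n → Fin n → Fin n → ℂ)
    (hdiag : ∀ i, c i i i = 1 / z i + ∑ l ∈ Finset.univ.erase i, 1 / (z i - z l))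
    (hii : ∀ i j, i ≠ j → c i i j = -(1 / (z i - z j)) ∧ c i j i = -(1 / (z i - z j)) ∧
      c j i i = -(1 / (z i - z j)))
    (hoff : ∀ i j k, i ≠ j → j ≠ k → i ≠ k → c i j k = 0)
    (FE : Matrix (Fin n) (Fin n) ℂ)
    (hFE : ∀ i j, FE i j = ∑ k, z k * c i j k)
    (J : Matrix (Fin n) (Fin n) ℂ)
    (hJ : ∀ i j, J i j = 1) :
    FE = ((n : ℂ) + 1) • (1 : Matrix (Fin n) (Fin n) ℂ) - J ∧
    IsUnit FE.det ∧
    FE⁻¹ = ((n : ℂ) + 1)⁻¹ • ((1 : Matrix (Fin n) (Fin n) ℂ) + J) := by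

  have key : ∀ i j, FE i j = if i = j then (n : ℂ) else -1 := by
    intro i j
    by_cases h : i = j
    · subst h
      simp only [if_pos rfl]
      rw [hFE, ← Finset.add_sum_erase _ _ (Finset.mem_univ i), hdiag]
      have h1 : z i * (1 / z i + ∑ l ∈ Finset.univ.erase i, 1 / (z i - z l))
          = 1 + ∑ l ∈ Finset.univ.erase i, z i / (z i - z l) := by
        rw [mul_add, mul_one_div, div_self (hz0 i), Finset.mul_sum]
        simp [div_eq_mul_inv]
      rw [h1, add_assoc, ← Finset.sum_add_distrib]
      have h2 : ∀ l ∈ Finset.univ.erase i, z i / (z i - z l) + z l * c i i l = 1 := by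
        intro l hl
        have hli : l ≠ i := Finset.ne_of_mem_erase hl
        have hd : z i - z l ≠ 0 := sub_ne_zero.mpr (hzdist i l (Ne.symm hli))
        rw [(hii i l (Ne.symm hli)).1]
        field_simp
        ring
      rw [Finset.sum_congr rfl h2, Finset.sum_const,
        Finset.card_erase_of_mem (Finset.mem_univ i), Finset.card_univ, Fintype.card_fin,
        nsmul_eq_mul, mul_one, Nat.cast_sub hn]
      push_cast
      ring
    · simp only [if_neg h]
      rw [hFE]
      have hz : ∀ k ∈ Finset.univ, k ∉ ({i, j} : Finset (Fin n)) → z k * c i j k = 0 := by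
        intro k _ hk
        simp only [Finset.mem_insert, Finset.mem_singleton, not_or] at hk
        rw [hoff i j k h (Ne.symm hk.2) (Ne.symm hk.1), mul_zero]
      rw [← Finset.sum_subset (Finset.subset_univ {i, j}) hz, Finset.sum_pair h,
        (hii i j h).2.1, (hii j i (Ne.symm h)).2.2]
      have hd : z i - z j ≠ 0 := sub_ne_zero.mpr (hzdist i j h)
      have hd' : z j - z i ≠ 0 := sub_ne_zero.mpr (hzdist j i (Ne.symm h))
      field_simp
      ring
  have h1 : FE = ((n : ℂ) + 1) • (1 : Matrix (Fin n) (Fin n) ℂ) - J := by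
    ext i j
    simp only [Matrix.sub_apply, Matrix.smul_apply, Matrix.one_apply, hJ, key, smul_eq_mul]
    by_cases h : i = j <;> simp [h]
  have hne : ((n : ℂ) + 1) ≠ 0 := by
    have : ((n : ℂ) + 1) = ((n + 1 : ℕ) : ℂ) := by push_cast; ring
    rw [this]
    exact_mod_cast Nat.succ_ne_zero n
  have hJJ : J * J = (n : ℂ) • J := by
    ext i j
    simp [Matrix.mul_apply, hJ, Finset.card_univ]
  have hmul : FE * (((n : ℂ) + 1)⁻¹ • ((1 : Matrix (Fin n) (Fin n) ℂ) + J)) = 1 := by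
    rw [h1, Matrix.mul_smul, mul_add, mul_one, Matrix.sub_mul, Matrix.smul_mul, one_mul, hJJ]
    have h2 : ((n : ℂ) + 1) • (1 : Matrix (Fin n) (Fin n) ℂ) - J +
        (((n : ℂ) + 1) • J - (n : ℂ) • J)
        = ((n : ℂ) + 1) • (1 : Matrix (Fin n) (Fin n) ℂ) := by
      module
    rw [h2, smul_smul, inv_mul_cancel₀ hne, one_smul]
  refine ⟨h1, Matrix.isUnit_det_of_right_inverse hmul, Matrix.inv_eq_right_inv hmul⟩
end

section
/- Let A be a finite-dimensional ℂ-vector space, Ξ a symmetric ℂ-trilinear form on A, and V ∈ A such that the bilinear form (x,y)_V := Ξ(V,x,y) is nondegenerate. Then there exists a unique ℂ-bilinear multiplication *_V on A satisfying (x, y *_V z)_V = Ξ(x,y,z) for all x, y, z ∈ A; moreover *_V is commutative, V is a two-sided unit for *_V, and the compatibility (x *_V y, z)_V = (x, y *_V z)_V holds for all x, y, z. -/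
/-- Given a symmetric trilinear form `Ξ` on a finite-dimensional ℂ-vector
space and `V` with `(x,y)_V := Ξ(V,x,y)` nondegenerate, there is a unique bilinear
multiplication `*_V` with `(x, y *_V z)_V = Ξ(x,y,z)`; it is commutative, has unit `V`,
and satisfies `(x *_V y, z)_V = (x, y *_V z)_V`. -/
theorem special_kahler_multiplication_exists_unique
    {A : Type*} [AddCommGroup A] [Module ℂ A] [FiniteDimensional ℂ A]
    (Ξ : A →ₗ[ℂ] A →ₗ[ℂ] A →ₗ[ℂ] ℂ)
    (hsymm1 : ∀ x y z : A, Ξ x y z = Ξ y x z)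
    (hsymm2 : ∀ x y z : A, Ξ x y z = Ξ x z y)
    (V : A)
    (hnd : ∀ x : A, (∀ y : A, Ξ V x y = 0) → x = 0) :
    (∃! mul : A →ₗ[ℂ] A →ₗ[ℂ] A, ∀ x y z : A, Ξ V x (mul y z) = Ξ x y z) ∧
    (∀ mul : A →ₗ[ℂ] A →ₗ[ℂ] A, (∀ x y z : A, Ξ V x (mul y z) = Ξ x y z) →
      (∀ x y : A, mul x y = mul y x) ∧
      (∀ x : A, mul V x = x) ∧
      (∀ x : A, mul x V = x) ∧
      (∀ x y z : A, Ξ V (mul x y) z = Ξ V x (mul y z))) := by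
  -- cancellation from nondegeneracy
  have cancel : ∀ a b : A, (∀ x : A, Ξ V x a = Ξ V x b) → a = b := by
    intro a b h
    have h0 : a - b = 0 := by
      apply hnd
      intro y
      have hy : Ξ V y a = Ξ V y b := h y
      have : Ξ V (a - b) y = Ξ V y (a - b) := by
        rw [hsymm2 V (a - b) y]
      rw [this]
      simp [map_sub, hy]
    exact sub_eq_zero.mp h0
  -- the linear map to the dual
  set φ : A →ₗ[ℂ] (A →ₗ[ℂ] ℂ) := Ξ V with hφ
  have hinj : Function.Injective φ := by
    intro a b hab
    apply cancel
    intro x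
    rw [hsymm2 V x a, hsymm2 V x b]
    exact DFunLike.congr_fun hab x
  have hdim : Module.finrank ℂ A = Module.finrank ℂ (A →ₗ[ℂ] ℂ) :=
    (Subspace.dual_finrank_eq (K := ℂ) (V := A)).symm
  let e : A ≃ₗ[ℂ] (A →ₗ[ℂ] ℂ) := φ.linearEquivOfInjective hinj hdim
  have he : ∀ x : A, e x = φ x := fun x => rfl
  let mul : A →ₗ[ℂ] A →ₗ[ℂ] A := LinearMap.mk₂ ℂ (fun y z => e.symm (Ξ y z))
    (fun y y' z => by simp [map_add])
    (fun c y z => by simp)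
    (fun y z z' => by simp [map_add])
    (fun c y z => by simp)
  have hmul : ∀ x y z : A, Ξ V x (mul y z) = Ξ x y z := by
    intro x y z
    have h1 : Ξ V x (mul y z) = φ (mul y z) x := by
      rw [hsymm2 V x (mul y z)]
    have h2 : φ (e.symm (Ξ y z)) = Ξ y z := by
      rw [← he]; exact e.apply_symm_apply _
    rw [h1]
    show φ (e.symm (Ξ y z)) x = Ξ x y z
    rw [h2, hsymm2 y z x, hsymm1 y x z]
  refine ⟨⟨mul, hmul, ?_⟩, ?_⟩
  · intro m hm
    ext y z
    apply cancel
    intro x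
    rw [hm x y z, hmul x y z]
  · intro m hm
    refine ⟨?_, ?_, ?_, ?_⟩
    · intro x y
      apply cancel
      intro w
      rw [hm w x y, hm w y x, hsymm2 w x y]
    · intro x
      apply cancel
      intro w
      rw [hm w V x, hsymm1 w V x]
    · intro x
      apply cancel
      intro w
      rw [hm w x V, hsymm2 w x V, hsymm1 w V x]
    · intro x y z
      rw [hm x y z, hsymm2 V (m x y) z]
      rw [hm z x y, hsymm1 z x y, hsymm2 x z y, hsymm2 x y z]
end

section
/- Let A be a finite-dimensional ℂ-vector space, Ξ a symmetric ℂ-trilinear form on A, and V, V' ∈ A such that both bilinear forms (x,y)_V := Ξ(V,x,y) and (x,y)_{V'} := Ξ(V',x,y) are nondegenerate. Let *_V and *_{V'} be the multiplications determined by (x, y *_V z)_V = Ξ(x,y,z) and (x, y *_{V'} z)_{V'} = Ξ(x,y,z). Assume *_V is associative. Then the linear map x ↦ V' *_V x is bijective, there exists w ∈ A with V' *_V w = V, the multiplication *_{V'} is the rescaling of *_V by w, i.e. x *_{V'} y = (x *_V y) *_V w for all x, y ∈ A, and *_{V'} is associative. -/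
/-- Different choices of `V` correspond to rescalings of the algebra: if
`*_V` (with unit `V`) is associative, then `x ↦ V' *_V x` is bijective, there is `w`
with `V' *_V w = V`, the multiplication `*_{V'}` is the rescaling of `*_V` by `w`,
and `*_{V'}` is associative. -/
theorem special_kahler_multiplication_rescaling
    {A : Type*} [AddCommGroup A] [Module ℂ A] [FiniteDimensional ℂ A]
    (Ξ : A →ₗ[ℂ] A →ₗ[ℂ] A →ₗ[ℂ] ℂ)
    (hsymm1 : ∀ x y z : A, Ξ x y z = Ξ y x z)
    (hsymm2 : ∀ x y z : A, Ξ x y z = Ξ x z y)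
    (V V' : A)
    (hndV : ∀ x : A, (∀ y : A, Ξ V x y = 0) → x = 0)
    (hndV' : ∀ x : A, (∀ y : A, Ξ V' x y = 0) → x = 0)
    (mulV : A →ₗ[ℂ] A →ₗ[ℂ] A)
    (hmulV : ∀ x y z : A, Ξ V x (mulV y z) = Ξ x y z)
    (mulV' : A →ₗ[ℂ] A →ₗ[ℂ] A)
    (hmulV' : ∀ x y z : A, Ξ V' x (mulV' y z) = Ξ x y z)
    (hassoc : ∀ x y z : A, mulV (mulV x y) z = mulV x (mulV y z)) :
    Function.Bijective (fun x : A => mulV V' x) ∧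
    (∃ w : A, mulV V' w = V ∧ ∀ x y : A, mulV' x y = mulV (mulV x y) w) ∧
    (∀ x y z : A, mulV' (mulV' x y) z = mulV' x (mulV' y z)) := by
  -- nondegeneracy in the second slot, for V and V'
  have hnd2 : ∀ a b : A, (∀ x : A, Ξ V x a = Ξ V x b) → a = b := by
    intro a b h
    have : a - b = 0 := by
      apply hndV
      intro y
      rw [hsymm2]
      simp [map_sub, h y]
    exact sub_eq_zero.mp this
  have hnd2' : ∀ a b : A, (∀ x : A, Ξ V' x a = Ξ V' x b) → a = b := by
    intro a b h
    have : a - b = 0 := by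
      apply hndV'
      intro y
      rw [hsymm2]
      simp [map_sub, h y]
    exact sub_eq_zero.mp this
  -- commutativity of mulV
  have hcomm : ∀ x y : A, mulV x y = mulV y x := by
    intro x y
    apply hnd2
    intro z
    rw [hmulV, hmulV, hsymm2]
  -- V is a unit
  have hunit : ∀ y : A, mulV V y = y := by
    intro y
    apply hnd2
    intro z
    rw [hmulV, hsymm1]
  have hunit' : ∀ y : A, mulV y V = y := fun y => (hcomm y V).trans (hunit y)
  -- injectivity of multiplication by V'
  have hker : LinearMap.ker (mulV V') = ⊥ := by
    rw [LinearMap.ker_eq_bot']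
    intro x hx
    apply hndV'
    intro y
    calc Ξ V' x y = Ξ y V' x := by rw [hsymm2, hsymm1]
    _ = Ξ V y (mulV V' x) := (hmulV y V' x).symm
    _ = 0 := by rw [hx]; simp
  have hinj : Function.Injective (mulV V') := LinearMap.ker_eq_bot.mp hker
  have hsurj : Function.Surjective (mulV V') :=
    (LinearMap.injective_iff_surjective).mp hinj
  obtain ⟨w, hw⟩ := hsurj V
  have key : ∀ u : A, mulV V' (mulV u w) = u := by
    intro u
    rw [← hassoc, hcomm V' u, hassoc, hw, hunit']
  have hres : ∀ x y : A, mulV' x y = mulV (mulV x y) w := by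
    intro x y
    apply hnd2'
    intro z
    rw [hmulV']
    calc Ξ z x y = Ξ V z (mulV x y) := (hmulV z x y).symm
    _ = Ξ V z (mulV V' (mulV (mulV x y) w)) := by rw [key]
    _ = Ξ z V' (mulV (mulV x y) w) := hmulV z V' _
    _ = Ξ V' z (mulV (mulV x y) w) := (hsymm1 z V' _)
  refine ⟨⟨hinj, hsurj⟩, ⟨w, hw, hres⟩, ?_⟩
  intro x y z
  rw [hres, hres, hres, hres]
  have hin : mulV (mulV (mulV x y) w) z = mulV x (mulV (mulV y z) w) := by
    calc mulV (mulV (mulV x y) w) z = mulV (mulV x y) (mulV w z) := hassoc _ _ _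
      _ = mulV (mulV x y) (mulV z w) := by rw [hcomm w z]
      _ = mulV (mulV (mulV x y) z) w := (hassoc _ _ _).symm
      _ = mulV (mulV x (mulV y z)) w := by rw [hassoc x y z]
      _ = mulV x (mulV (mulV y z) w) := hassoc _ _ _
  rw [hin]
end
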